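/- For every integer n ≥ 1, in the hard n-round tournament H_n, player 1 wins the complete tournament (i.e. wp(1,P,σ) = 1) if and only if σ is the draw placing players 1,2,…,2^n on the leaves in this left-to-right order (up to the identification of draws by swapping subtrees at internal nodes). In particular, there is exactly one draw in which player 1 wins H_n. -/

import Mathlib

/-- A perfect (balanced) binary tree of depth `n` with leaves labelled by `α`. -/
inductive BT (α : Type) : ℕ → Type
  | leaf : α → BT α 0
  | node {n : ℕ} : BT α n → BT α n → BT α (n + 1)

namespace BT

/-- The list of leaf labels, from left to right. -/
def leaves {α : Type} : ∀ {n : ℕ}, BT α n → List α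
  | _, .leaf a => [a]
  | _, .node L R => L.leaves ++ R.leaves

/-- Relabel the leaves of a tree. -/
def map {α β : Type} (f : α → β) : ∀ {n : ℕ}, BT α n → BT β n
  | _, .leaf a => .leaf (f a)
  | _, .node L R => .node (L.map f) (R.map f)

end BT

/-- Two trees represent the same draw iff one can be obtained from the other by
swapping the two children subtrees at internal nodes. -/
def BTequiv {α : Type} : ∀ {n : ℕ}, BT α n → BT α n → Prop
  | 0, .leaf a, .leaf b => a = b
  | _ + 1, .node L R, .node L' R' =>
      (BTequiv L L' ∧ BTequiv R R') ∨ (BTequiv L R' ∧ BTequiv R L')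

/-- A draw: each of the `N` players occurs exactly once among the leaves. -/
def IsDraw {N n : ℕ} (t : BT (Fin N) n) : Prop :=
  ∀ i : Fin N, t.leaves.count i = 1

/-- The winning distribution of a knockout tournament: `wd P t i` is the probability
that player `i` wins the (sub)tournament with draw `t` and comparison matrix `P`. -/
noncomputable def wd {N : ℕ} (P : Fin N → Fin N → ℝ) :
    ∀ {n : ℕ}, BT (Fin N) n → Fin N → ℝ
  | _, .leaf j => fun i => if i = j then 1 else 0
  | _, .node L R => fun i =>
      wd P L i * (∑ j, wd P R j * P i j) + wd P R i * (∑ j, wd P L j * P i j)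

/-- `P` is a comparison matrix. -/
def IsCompMatrix {N : ℕ} (P : Fin N → Fin N → ℝ) : Prop :=
  ∀ i j : Fin N, i ≠ j → 0 ≤ P i j ∧ P i j ≤ 1 ∧ P i j + P j i = 1

/-- `P` is deterministic: every off-diagonal entry is 0 or 1. -/
def IsDet {N : ℕ} (P : Fin N → Fin N → ℝ) : Prop :=
  ∀ i j : Fin N, i ≠ j → P i j = 0 ∨ P i j = 1

/-- The set `𝒫(P,ε)` of ε-perturbations of `P`. -/
def perturbs {N : ℕ} (P : Fin N → Fin N → ℝ) (ε : ℝ) : Set (Fin N → Fin N → ℝ) :=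
  {P' | IsCompMatrix P' ∧ ∀ i j : Fin N, i ≠ j → |P' i j - P i j| ≤ ε}

/-- The ε-guaranteed winning probability `wp_ε(i,P,σ)`. -/
noncomputable def wpe {N n : ℕ} (i : Fin N) (P : Fin N → Fin N → ℝ) (ε : ℝ)
    (t : BT (Fin N) n) : ℝ :=
  sInf ((fun P' => wd P' t i) '' perturbs P ε)

/-- The comparison matrix of the hard `n`-round tournament `H_n` (players 0-indexed):
for `i < j`, player `i` beats player `j` iff `i = j - 2 ^ v` where `2 ^ v` is the largest
power of 2 dividing `j` (in 0-indexed numbering). -/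
noncomputable def hardP (n : ℕ) : Fin (2 ^ n) → Fin (2 ^ n) → ℝ := fun i j =>
  if i = j then 0
  else if (i : ℕ) < (j : ℕ) then
    (if (i : ℕ) + 2 ^ padicValNat 2 (j : ℕ) = (j : ℕ) then 1 else 0)
  else
    (if (j : ℕ) + 2 ^ padicValNat 2 (i : ℕ) = (i : ℕ) then 0 else 1)

/-- The tree of depth `n` whose leaves are `s, s+1, …, s + 2^n - 1` from left to right. -/
def ordTree : (n : ℕ) → ℕ → BT ℕ n
  | 0, s => .leaf s
  | n + 1, s => .node (ordTree n s) (ordTree n (s + 2 ^ n))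

/-- The identity draw, placing players `0, 1, …, 2^n - 1` on the leaves in order. -/
def idDraw (n : ℕ) : BT (Fin (2 ^ n)) n :=
  (ordTree n 0).map (fun k => ⟨k % 2 ^ n, Nat.mod_lt _ (by positivity)⟩)

/-- `f_p(x,y) = p(x+y) + (1-2p)xy`. -/
def fp (p x y : ℝ) : ℝ := p * (x + y) + (1 - 2 * p) * x * y

/-- `B_p` on trees with real leaf labels. -/
noncomputable def Bp (p : ℝ) : ∀ {n : ℕ}, BT ℝ n → ℝ
  | _, .leaf x => x
  | _, .node L R => fp p (Bp p L) (Bp p R)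

/-- Group a list into consecutive pairs. -/
def pairList {α : Type} : List α → List (α × α)
  | a :: b :: rest => (a, b) :: pairList rest
  | _ => []

/-- The first-round matches of a draw: the consecutive sibling pairs of leaves. -/
def firstPairs {α : Type} {n : ℕ} (t : BT α n) : List (α × α) := pairList t.leaves

/-- A draw is mixed (w.r.t. the set `B` of big players) if every first-round match
pairs a big player with a small player. -/
def MixedDraw {N n : ℕ} (B : Finset (Fin N)) (t : BT (Fin N) n) : Prop :=
  ∀ q ∈ firstPairs t, ((q.1 ∈ B) ↔ q.2 ∉ B)

/-- Number of leaves labelled `1`. -/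
noncomputable def ones {n : ℕ} (t : BT ℝ n) : ℕ := t.leaves.count 1

/-- All leaf labels are `0` or `1`. -/
def ZeroOne {n : ℕ} (t : BT ℝ n) : Prop := ∀ x ∈ t.leaves, x = 0 ∨ x = 1

/-- `P[kl←t]`: the matrix agreeing with `P` except `P k l = t` and `P l k = 1 - t`. -/
def updPair {N : ℕ} (P : Fin N → Fin N → ℝ) (k l : Fin N) (t : ℝ) :
    Fin N → Fin N → ℝ :=
  fun i j => if i = k ∧ j = l then t else if i = l ∧ j = k then 1 - t else P i j

/-- Perturb a deterministic matrix: for each pair `(w, l) ∈ S` (winner first),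
set `P w l = 1 - ε` and `P l w = ε`; other entries unchanged. -/
def detPerturb {N : ℕ} (P : Fin N → Fin N → ℝ) (S : Finset (Fin N × Fin N)) (ε : ℝ) :
    Fin N → Fin N → ℝ :=
  fun i j => if (i, j) ∈ S then 1 - ε else if (j, i) ∈ S then ε else P i j

/-- Swap the result of the single match between `a` and `b`. -/
def swapPair {N : ℕ} (P : Fin N → Fin N → ℝ) (a b : Fin N) : Fin N → Fin N → ℝ :=
  fun i j => if i = a ∧ j = b then P b a else if i = b ∧ j = a then P a b else P i j

/-- The pair `(a,b)` (with `a` the winner) is crucial for `i` in `C(P,σ)`. -/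
def Crucial {N n : ℕ} (P : Fin N → Fin N → ℝ) (σ : BT (Fin N) n) (i : Fin N)
    (a b : Fin N) : Prop :=
  a ≠ b ∧ P a b = 1 ∧ wd (swapPair P a b) σ i = 0

/-!
Number the players from `0`. Player `0` beats exactly the powers of two, and a positive player
never beats one of larger bit length. So the winner of a subtree avoiding `0` has the largest bit
length among its leaves, and by counting a subtree of depth `d` avoiding `0` is won by a player
`≥ 2^d`. If `0` wins, its final opponent is therefore the power of two `2^(n-1)`. The half of `0`
then contains no power of two `≥ 2^(n-1)`, which by induction forces it to be the ordered draw of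
`[0, 2^(n-1))`; the other half is `[2^(n-1), 2^n)`, where the tournament is a shifted copy of the
one on `[0, 2^(n-1))`.
-/

namespace BT

variable {α β : Type}

theorem length_leaves : ∀ {n : ℕ} (t : BT α n), t.leaves.length = 2 ^ n
  | _, .leaf _ => rfl
  | _, .node L R => by simp [leaves, length_leaves L, length_leaves R, pow_succ, mul_two]

theorem leaves_map (f : α → β) : ∀ {n : ℕ} (t : BT α n), (t.map f).leaves = t.leaves.map f
  | _, .leaf _ => rfl
  | _, .node L R => by simp [map, leaves, leaves_map f L, leaves_map f R]

theorem map_map {γ : Type} (f : α → β) (g : β → γ) :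
    ∀ {n : ℕ} (t : BT α n), (t.map f).map g = t.map (g ∘ f)
  | _, .leaf _ => rfl
  | _, .node L R => by simp [map, map_map f g L, map_map f g R]

theorem map_eq_self_of_forall_mem (f : α → α) :
    ∀ {n : ℕ} (t : BT α n), (∀ a ∈ t.leaves, f a = a) → t.map f = t
  | _, .leaf a, h => by simp [map, h a (by simp [leaves])]
  | _, .node L R, h => by
      simp only [leaves, List.mem_append] at h
      rw [map, map_eq_self_of_forall_mem f L fun a ha => h a (.inl ha),
        map_eq_self_of_forall_mem f R fun a ha => h a (.inr ha)]

theorem exists_map_add_eq (m k : ℕ) {n : ℕ} (t : BT ℕ n)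
    (h : ∀ s ∈ t.leaves, m ≤ s ∧ s < m + k) :
    ∃ t' : BT ℕ n, t'.map (m + ·) = t ∧ ∀ s ∈ t'.leaves, s < k := by
  refine ⟨t.map (· - m), ?_, ?_⟩
  · rw [map_map]
    exact map_eq_self_of_forall_mem _ t fun s hs => Nat.add_sub_of_le (h s hs).1
  · intro s hs
    rw [leaves_map, List.mem_map] at hs
    obtain ⟨s, hs, rfl⟩ := hs
    have := h s hs
    omega

section winner

variable (r : α → α → Prop) [DecidableRel r]

def winner : ∀ {n : ℕ}, BT α n → α
  | _, .leaf a => a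
  | _, .node L R => if r L.winner R.winner then L.winner else R.winner

theorem winner_mem_leaves : ∀ {n : ℕ} (t : BT α n), t.winner r ∈ t.leaves
  | _, .leaf _ => List.mem_singleton_self _
  | _, .node L R => by
      rw [winner, leaves, List.mem_append]
      split
      exacts [.inl (winner_mem_leaves L), .inr (winner_mem_leaves R)]

theorem winner_node_comm (hasymm : ∀ a b, r a b → ¬ r b a)
    (htotal : ∀ a b, a ≠ b → r a b ∨ r b a) {n : ℕ} (L R : BT α n) :
    (node L R).winner r = (node R L).winner r := by
  simp only [winner]
  by_cases hLR : L.winner r = R.winner r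
  · simp [hLR]
  · rcases htotal _ _ hLR with h | h <;> simp [h, hasymm _ _ h]

theorem winner_map (r' : β → β → Prop) [DecidableRel r'] (f : α → β) :
    ∀ {n : ℕ} (t : BT α n), (∀ a ∈ t.leaves, ∀ b ∈ t.leaves, r' (f a) (f b) ↔ r a b) →
      (t.map f).winner r' = f (t.winner r)
  | _, .leaf _, _ => rfl
  | _, .node L R, h => by
      simp only [leaves, List.mem_append] at h
      rw [map, winner, winner, apply_ite f,
        winner_map r' f L fun a ha b hb => h a (.inl ha) b (.inl hb),
        winner_map r' f R fun a ha b hb => h a (.inr ha) b (.inr hb)]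
      exact if_congr (h _ (.inl (winner_mem_leaves r L)) _ (.inr (winner_mem_leaves r R)))
        rfl rfl

theorem le_winner_of_mem {γ : Type} [Preorder γ] (f : α → γ) (p : α → Prop)
    (htotal : ∀ a b, a ≠ b → r a b ∨ r b a)
    (hf : ∀ a b, p a → p b → r a b → f b ≤ f a) :
    ∀ {n : ℕ} (t : BT α n), (∀ s ∈ t.leaves, p s) → ∀ s ∈ t.leaves, f s ≤ f (t.winner r)
  | _, .leaf _, _, s, hs => by rw [List.mem_singleton.1 hs]; rfl
  | _, .node L R, hp, s, hs => by
      simp only [leaves, List.mem_append] at hp hs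
      have hpL : ∀ s ∈ L.leaves, p s := fun s hs => hp s (.inl hs)
      have hpR : ∀ s ∈ R.leaves, p s := fun s hs => hp s (.inr hs)
      have hL := hpL _ (winner_mem_leaves r L)
      have hR := hpR _ (winner_mem_leaves r R)
      have hmax : f (L.winner r) ≤ f ((node L R).winner r) ∧
          f (R.winner r) ≤ f ((node L R).winner r) := by
        rw [winner]
        split_ifs with h
        · exact ⟨le_rfl, hf _ _ hL hR h⟩
        · rcases eq_or_ne (L.winner r) (R.winner r) with he | hne
          · exact ⟨(congrArg f he).le, le_rfl⟩
          · exact ⟨hf _ _ hR hL ((htotal _ _ hne).resolve_left h), le_rfl⟩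
      rcases hs with hs | hs
      exacts [(le_winner_of_mem f p htotal hf L hpL s hs).trans hmax.1,
        (le_winner_of_mem f p htotal hf R hpR s hs).trans hmax.2]

end winner

end BT

namespace BTequiv

variable {α β : Type}

theorem map (f : α → β) :
    ∀ {n : ℕ} {t t' : BT α n}, BTequiv t t' → BTequiv (t.map f) (t'.map f)
  | 0, .leaf _, .leaf _, h => congrArg f h
  | _ + 1, .node _ _, .node _ _, h => h.imp (.imp (map f) (map f)) (.imp (map f) (map f))

theorem of_map {f : α → β} (hf : Function.Injective f) :
    ∀ {n : ℕ} {t t' : BT α n}, BTequiv (t.map f) (t'.map f) → BTequiv t t'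
  | 0, .leaf _, .leaf _, h => hf h
  | _ + 1, .node _ _, .node _ _, h =>
      h.imp (.imp (of_map hf) (of_map hf)) (.imp (of_map hf) (of_map hf))

theorem map_iff {f : α → β} (hf : Function.Injective f) {n : ℕ} {t t' : BT α n} :
    BTequiv (t.map f) (t'.map f) ↔ BTequiv t t' :=
  ⟨of_map hf, map f⟩

theorem perm_leaves : ∀ {n : ℕ} {t t' : BT α n}, BTequiv t t' → t.leaves.Perm t'.leaves
  | 0, .leaf _, .leaf _, h => by rw [show _ = _ from h]
  | _ + 1, .node _ _, .node _ _, h => by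
      rcases h with ⟨hL, hR⟩ | ⟨hL, hR⟩
      · exact hL.perm_leaves.append hR.perm_leaves
      · exact (hL.perm_leaves.append hR.perm_leaves).trans List.perm_append_comm

theorem node_swap {n : ℕ} {L R : BT α n} {u : BT α (n + 1)}
    (h : BTequiv (BT.node R L) u) : BTequiv (BT.node L R) u := by
  cases u
  exact h.symm.imp And.symm And.symm

theorem winner_eq (r : α → α → Prop) [DecidableRel r] (hasymm : ∀ a b, r a b → ¬ r b a)
    (htotal : ∀ a b, a ≠ b → r a b ∨ r b a) :
    ∀ {n : ℕ} {t t' : BT α n}, BTequiv t t' → t.winner r = t'.winner r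
  | 0, .leaf _, .leaf _, h => h
  | _ + 1, .node _ _, .node _ _, h => by
      rcases h with ⟨hL, hR⟩ | ⟨hL, hR⟩
      · simp only [BT.winner, winner_eq r hasymm htotal hL, winner_eq r hasymm htotal hR]
      · rw [BT.winner_node_comm r hasymm htotal]
        simp only [BT.winner, winner_eq r hasymm htotal hL, winner_eq r hasymm htotal hR]

end BTequiv

theorem leaves_ordTree : ∀ (d s : ℕ), (ordTree d s).leaves = List.range' s (2 ^ d)
  | 0, _ => rfl
  | d + 1, s => by
      rw [ordTree, BT.leaves, leaves_ordTree, leaves_ordTree, pow_succ, mul_two,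
        ← List.range'_append, one_mul]

theorem ordTree_map_add : ∀ (d s m : ℕ), (ordTree d s).map (m + ·) = ordTree d (m + s)
  | 0, _, _ => rfl
  | d + 1, s, m => by
      rw [ordTree, BT.map, ordTree_map_add, ordTree_map_add, ordTree, add_assoc]

theorem wd_eq_ite_winner {N : ℕ} (P : Fin N → Fin N → ℝ) (r : Fin N → Fin N → Prop)
    [DecidableRel r] (hP : ∀ i j, i ≠ j → P i j = if r i j then 1 else 0)
    (hasymm : ∀ a b, r a b → ¬ r b a) (htotal : ∀ a b, a ≠ b → r a b ∨ r b a) :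
    ∀ {n : ℕ} (t : BT (Fin N) n), t.leaves.Nodup →
      ∀ i, wd P t i = if i = t.winner r then 1 else 0
  | _, .leaf _, _, _ => rfl
  | _, .node L R, hnd, i => by
      rw [BT.leaves, List.nodup_append] at hnd
      have hne : L.winner r ≠ R.winner r :=
        hnd.2.2 _ (BT.winner_mem_leaves r L) _ (BT.winner_mem_leaves r R)
      simp only [wd, wd_eq_ite_winner P r hP hasymm htotal L hnd.1,
        wd_eq_ite_winner P r hP hasymm htotal R hnd.2.1, ite_mul, one_mul, zero_mul,
        Finset.sum_ite_eq', Finset.mem_univ, if_true, BT.winner]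
      by_cases hi : i = L.winner r
      · subst hi
        rw [hP _ _ hne]
        split_ifs <;> simp_all
      · by_cases hi' : i = R.winner r
        · subst hi'
          rw [hP _ _ hne.symm]
          have := htotal _ _ hne
          split_ifs <;> simp_all
        · simp [hi, hi', apply_ite (i = ·)]

namespace Hard

/-- The results of `hardP`, players numbered from `0`: a smaller player `a` beats `b` exactly
when `a` is `b` with its lowest binary digit cleared; otherwise the larger player wins. -/
def Beats (a b : ℕ) : Prop :=
  (a < b ∧ a + 2 ^ padicValNat 2 b = b) ∨ (b < a ∧ b + 2 ^ padicValNat 2 a ≠ a)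

instance : DecidableRel Beats := fun a b => by unfold Beats; infer_instance

theorem Beats.asymm {a b : ℕ} : Beats a b → ¬ Beats b a := by unfold Beats; omega

theorem Beats.total {a b : ℕ} (h : a ≠ b) : Beats a b ∨ Beats b a := by unfold Beats; omega

theorem hardP_eq_ite {n : ℕ} (i j : Fin (2 ^ n)) (h : i ≠ j) :
    hardP n i j = if Beats i j then 1 else 0 := by
  have := Fin.val_ne_of_ne h
  unfold hardP
  by_cases hB : Beats i j <;> simp only [hB, if_true, if_false] <;> unfold Beats at hB <;>
    split_ifs <;> first | rfl | omega

theorem eq_two_pow_of_zero_beats {b : ℕ} (h : Beats 0 b) : b = 2 ^ padicValNat 2 b := by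
  unfold Beats at h; omega

theorem padicValNat_add_of_lt {k m b : ℕ} (hm : 2 ^ k ∣ m) (hb : b ≠ 0) (hbk : b < 2 ^ k) :
    padicValNat 2 (m + b) = padicValNat 2 b := by
  have hvk : padicValNat 2 b < k := (Nat.pow_lt_pow_iff_right one_lt_two).1
    ((Nat.le_of_dvd (by omega) pow_padicValNat_dvd).trans_lt hbk)
  have hdvd {v : ℕ} (hv : v ≤ k) : 2 ^ v ∣ m := (pow_dvd_pow 2 hv).trans hm
  apply le_antisymm
  · by_contra! h
    have := (padicValNat_dvd_iff_le (by omega)).2 h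
    exact pow_succ_padicValNat_not_dvd (p := 2) hb
      ((Nat.dvd_add_right (hdvd (v := _ + 1) hvk)).1 this)
  · exact (padicValNat_dvd_iff_le (by omega)).1 (dvd_add (hdvd hvk.le) pow_padicValNat_dvd)

theorem beats_add_iff {k m a b : ℕ} (hm : 2 ^ k ∣ m) (ha : a < 2 ^ k) (hb : b < 2 ^ k) :
    Beats (m + a) (m + b) ↔ Beats a b := by
  rcases eq_or_ne a 0 with rfl | ha0 <;> rcases eq_or_ne b 0 with rfl | hb0
  · simp only [Beats]; omega
  · simp only [Beats, padicValNat_add_of_lt hm hb0 hb]; omega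
  · simp only [Beats, padicValNat_add_of_lt hm ha0 ha]; omega
  · simp only [Beats, padicValNat_add_of_lt hm ha0 ha, padicValNat_add_of_lt hm hb0 hb]; omega

theorem winner_map_add {k m : ℕ} (hm : 2 ^ k ∣ m) {n : ℕ} (t : BT ℕ n)
    (ht : ∀ s ∈ t.leaves, s < 2 ^ k) : (t.map (m + ·)).winner Beats = m + t.winner Beats :=
  BT.winner_map Beats Beats _ t fun a ha b hb => beats_add_iff hm (ht a ha) (ht b hb)

theorem winner_ordTree : ∀ (d s : ℕ), 2 ^ d ∣ s → (ordTree d s).winner Beats = s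
  | 0, _, _ => rfl
  | d + 1, s, h => by
      have hd : 2 ^ d ∣ s := (pow_dvd_pow 2 d.le_succ).trans h
      have hv : padicValNat 2 (s + 2 ^ d) = d := by
        rw [padicValNat_add_of_lt h (by positivity)
          (Nat.pow_lt_pow_right one_lt_two d.lt_succ_self), padicValNat.prime_pow]
      have hbeats : Beats s (s + 2 ^ d) :=
        .inl ⟨Nat.lt_add_of_pos_right (by positivity), by rw [hv]⟩
      rw [ordTree, BT.winner, winner_ordTree d s hd,
        winner_ordTree d _ (dvd_add hd dvd_rfl), if_pos hbeats]

theorem log_le_log_of_beats {a b : ℕ} (h : Beats a b) (ha : a ≠ 0) :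
    Nat.log 2 b ≤ Nat.log 2 a := by
  rcases h with ⟨-, hab⟩ | ⟨hlt, -⟩
  · set v := padicValNat 2 b
    set L := Nat.log 2 a
    have hvb : 2 ^ v ∣ b := pow_padicValNat_dvd
    have hva : 2 ^ v ∣ a := Nat.dvd_add_self_right.1 (hab ▸ hvb)
    have hvL : v ≤ L := Nat.le_log_of_pow_le one_lt_two (Nat.le_of_dvd (by omega) hva)
    have haL : a < 2 ^ (L + 1) := Nat.lt_pow_succ_log_self one_lt_two a
    -- `a` and `2^(L+1)` are both multiples of `2^v`
    have hgap : 2 ^ v ≤ 2 ^ (L + 1) - a :=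
      Nat.le_of_dvd (by omega) (Nat.dvd_sub (pow_dvd_pow 2 (by omega)) hva)
    have hbne : b ≠ 2 ^ (L + 1) := fun hb => by
      have : v = L + 1 := by rw [← padicValNat.prime_pow (p := 2) (L + 1), ← hb]
      omega
    exact Nat.lt_succ_iff.1 (Nat.log_lt_of_lt_pow (by omega) (by omega))
  · exact Nat.log_mono_right hlt.le

theorem log_le_log_winner {n : ℕ} (t : BT ℕ n) (h0 : ∀ s ∈ t.leaves, s ≠ 0) :
    ∀ s ∈ t.leaves, Nat.log 2 s ≤ Nat.log 2 (t.winner Beats) :=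
  BT.le_winner_of_mem Beats (Nat.log 2) (· ≠ 0) (fun _ _ => Beats.total)
    (fun _ _ ha _ h => log_le_log_of_beats h ha) t h0

/-- Counting: the `2^n` distinct positive leaves all have bit length at most that of the winner. -/
theorem two_pow_le_winner {n : ℕ} (t : BT ℕ n) (hnd : t.leaves.Nodup)
    (h0 : ∀ s ∈ t.leaves, s ≠ 0) : 2 ^ n ≤ t.winner Beats := by
  set M := Nat.log 2 (t.winner Beats)
  have hsub : t.leaves.toFinset ⊆ Finset.Ico 1 (2 ^ (M + 1)) := fun s hs => by
    rw [List.mem_toFinset] at hs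
    have := h0 s hs
    exact Finset.mem_Ico.2 ⟨by omega,
      Nat.lt_pow_of_log_lt one_lt_two (Nat.lt_succ_of_le (log_le_log_winner t h0 s hs))⟩
  have hcard := Finset.card_le_card hsub
  rw [List.toFinset_card_of_nodup hnd, BT.length_leaves, Nat.card_Ico] at hcard
  have := Nat.one_le_two_pow (n := n)
  have hnM : n ≤ M := Nat.lt_succ_iff.1 ((Nat.pow_lt_pow_iff_right one_lt_two).1 (by omega))
  exact (Nat.pow_le_pow_right two_pos hnM).trans
    (Nat.pow_log_le_self 2 (h0 _ (BT.winner_mem_leaves Beats t)))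

theorem winner_eq_two_pow_of_zero_beats {d : ℕ} (t : BT ℕ d) (hnd : t.leaves.Nodup)
    (h0 : ∀ s ∈ t.leaves, s ≠ 0) (hbeats : Beats 0 (t.winner Beats))
    (hpow : ∀ v, 2 ^ v ∈ t.leaves → v ≤ d) : t.winner Beats = 2 ^ d := by
  have hle := two_pow_le_winner t hnd h0
  have hmem := BT.winner_mem_leaves Beats t
  rw [eq_two_pow_of_zero_beats hbeats] at hle hmem ⊢
  rw [le_antisymm (hpow _ hmem) ((Nat.pow_le_pow_iff_right one_lt_two).1 hle)]

theorem lt_of_winner_eq_two_pow {d : ℕ} (t : BT ℕ d) (h0 : ∀ s ∈ t.leaves, s ≠ 0)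
    (hw : t.winner Beats = 2 ^ d) : ∀ s ∈ t.leaves, s < 2 ^ (d + 1) := fun s hs => by
  have := log_le_log_winner t h0 s hs
  rw [hw, Nat.log_pow one_lt_two] at this
  exact Nat.lt_pow_of_log_lt one_lt_two (Nat.lt_succ_of_le this)

/-- The hypothesis on powers of two, unlike `∀ s ∈ t.leaves, s < 2 ^ d`, passes to the half
containing `0`, whose sibling's winner is `2 ^ (d - 1)`. -/
theorem equiv_ordTree_of_winner_eq_zero (d : ℕ) :
    ∀ t : BT ℕ d, t.leaves.Nodup → t.winner Beats = 0 →
      (∀ v, 2 ^ v ∈ t.leaves → v < d) → BTequiv t (ordTree d 0) := by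
  induction d with
  | zero => rintro (_ | _) - hw -; exact hw
  | succ d ih =>
    rintro (_ | ⟨L, R⟩) hnd hw hpow
    simp only [BT.leaves, List.mem_append] at hnd hpow
    wlog hL : L.winner Beats = 0 generalizing L R
    · have hR : R.winner Beats = 0 := by
        rw [BT.winner] at hw
        split_ifs at hw
        exacts [absurd hw hL, hw]
      exact BTequiv.node_swap (this R L (List.perm_append_comm.nodup_iff.1 hnd)
        (by rwa [BT.winner_node_comm Beats (fun _ _ => Beats.asymm) (fun _ _ => Beats.total)])
        (fun v hv => hpow v hv.symm) hR)
    obtain ⟨hndL, hndR, hdisj⟩ := List.nodup_append.1 hnd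
    have h0R : ∀ s ∈ R.leaves, s ≠ 0 := fun s hs h =>
      hdisj 0 (hL ▸ BT.winner_mem_leaves Beats L) s hs h.symm
    have hbeats : Beats 0 (R.winner Beats) := by
      by_contra h
      simp only [BT.winner, hL, if_neg h] at hw
      exact h0R _ (BT.winner_mem_leaves Beats R) hw
    have hwR : R.winner Beats = 2 ^ d := winner_eq_two_pow_of_zero_beats R hndR h0R hbeats
      fun v hv => Nat.lt_succ_iff.1 (hpow v (.inr hv))
    have h2dR : 2 ^ d ∈ R.leaves := hwR ▸ BT.winner_mem_leaves Beats R
    have hequivL : BTequiv L (ordTree d 0) := ih L hndL hL fun v hv => by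
      have := hpow v (.inl hv)
      have : v ≠ d := by rintro rfl; exact hdisj _ hv _ h2dR rfl
      omega
    have hmemL : ∀ s, s ∈ L.leaves ↔ s < 2 ^ d := fun s => by
      rw [hequivL.perm_leaves.mem_iff, leaves_ordTree, List.mem_range'_1]; omega
    obtain ⟨R', rfl, hR'⟩ := BT.exists_map_add_eq (2 ^ d) (2 ^ d) R fun s hs =>
      ⟨not_lt.1 fun h => hdisj s ((hmemL s).2 h) s hs rfl,
        by rw [← two_mul, ← pow_succ']; exact lt_of_winner_eq_two_pow _ h0R hwR s hs⟩
    have hw' : R'.winner Beats = 0 := by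
      have := winner_map_add dvd_rfl R' hR'
      omega
    have hequivR' := ih R' (by rw [BT.leaves_map] at hndR; exact hndR.of_map _) hw'
      fun v hv => (Nat.pow_lt_pow_iff_right one_lt_two).1 (hR' _ hv)
    have hequivR := hequivR'.map (2 ^ d + ·)
    rw [ordTree_map_add, add_zero] at hequivR
    rw [ordTree, zero_add]
    exact .inl ⟨hequivL, hequivR⟩

theorem equiv_ordTree_zero_iff {d : ℕ} (t : BT ℕ d) (hnd : t.leaves.Nodup)
    (hlt : ∀ s ∈ t.leaves, s < 2 ^ d) : BTequiv t (ordTree d 0) ↔ t.winner Beats = 0 :=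
  ⟨fun h => (h.winner_eq Beats (fun _ _ => Beats.asymm) (fun _ _ => Beats.total)).trans
      (winner_ordTree d 0 (dvd_zero _)),
    fun hw => equiv_ordTree_of_winner_eq_zero d t hnd hw fun _ hv =>
      (Nat.pow_lt_pow_iff_right one_lt_two).1 (hlt _ hv)⟩

theorem wd_hardP {n d : ℕ} (σ : BT (Fin (2 ^ n)) d) (hnd : σ.leaves.Nodup) (i : Fin (2 ^ n)) :
    wd (hardP n) σ i = if (i : ℕ) = (σ.map Fin.val).winner Beats then 1 else 0 := by
  rw [wd_eq_ite_winner (hardP n) (fun i j => Beats i j) hardP_eq_ite (fun _ _ => Beats.asymm)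
      (fun _ _ h => Beats.total (Fin.val_ne_of_ne h)) σ hnd,
    BT.winner_map (fun i j : Fin (2 ^ n) => Beats i j) Beats Fin.val σ fun _ _ _ _ => Iff.rfl]
  simp only [Fin.ext_iff]

end Hard

theorem idDraw_map_val (n : ℕ) : (idDraw n).map Fin.val = ordTree n 0 := by
  rw [idDraw, BT.map_map]
  refine BT.map_eq_self_of_forall_mem _ _ fun s hs => Nat.mod_eq_of_lt ?_
  rw [leaves_ordTree, List.mem_range'_1] at hs
  omega

/-- in the hard `n`-round tournament, player 1 (index 0) surely wins
iff the draw is (up to swapping subtrees at internal nodes) the identity draw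
placing players `0, 1, …, 2^n - 1` in left-to-right order. -/
theorem hard_tournament_unique_winning_draw (n : ℕ)
    (σ : BT (Fin (2 ^ n)) n) (hσ : IsDraw σ) :
    wd (hardP n) σ ⟨0, by positivity⟩ = 1 ↔ BTequiv σ (idDraw n) := by
  have hnd : σ.leaves.Nodup := List.nodup_iff_count_le_one.2 fun i => (hσ i).le
  have hndT : (σ.map Fin.val).leaves.Nodup := by
    rw [BT.leaves_map]
    exact hnd.map Fin.val_injective
  have hltT : ∀ s ∈ (σ.map Fin.val).leaves, s < 2 ^ n := by
    simp [BT.leaves_map]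
  rw [Hard.wd_hardP σ hnd, ← BTequiv.map_iff Fin.val_injective, idDraw_map_val,
    Hard.equiv_ordTree_zero_iff _ hndT hltT]
  simp [eq_comm]
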